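/- arXiv:1811.08922 — 7 statements merged into one kernel-verified Lean document; each statement's English description precedes it below -/
import Mathlib

section
/- Let (M,d) be a compact metric space and f_{1,∞} = (f_n)_{n∈ℕ} a sequence of continuous maps f_n : M → M. For each n let ψ_n : M → ℝ, and assume there are k ∈ ℕ, α ∈ (0,1], ε > 0 and C > 0 such that |ψ_n(x) − ψ_n(y)| ≤ C·d(x,y)^α whenever d(x,y) < ε and n ≥ k. Let V be a (δ,λ)-hyperbolic preball of order n for a point (k,x), with 0 < 2δ ≤ ε and 0 < λ < 1. Then, setting K = exp(C·(2δ)^α·(1−λ^α)^{−1}), one has K^{−1} ≤ exp(S_nψ(k,y) − S_nψ(k,z)) ≤ K for all y, z in the closure of V. -/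
open MeasureTheory Metric Set Filter

variable {M : Type*} [MetricSpace M]

/-- `iter f k n = f (k+n-1) ∘ ⋯ ∘ f (k+1) ∘ f k`, the `n`-fold composition along the
non-autonomous system `f_{1,∞}` (we index the sequence of maps by `ℕ` starting at `0`). -/
def iter (f : ℕ → M → M) (k : ℕ) : ℕ → M → M
  | 0 => id
  | n + 1 => f (k + n) ∘ iter f k n

/-- The topological support of a measure: points all of whose balls have positive measure. -/
def msupport [MeasurableSpace M] (m : Measure M) : Set M :=
  {x : M | ∀ r : ℝ, 0 < r → 0 < m (ball x r)}

/-- `m` is non-singular for the sequence `f`: images (in outer measure) and preimages of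
null measurable sets are null. -/
def NonSingular [MeasurableSpace M] (m : Measure M) (f : ℕ → M → M) : Prop :=
  ∀ n : ℕ, ∀ A : Set M, MeasurableSet A → m A = 0 →
    m (f n '' A) = 0 ∧ m (f n ⁻¹' A) = 0

/-- `A` is forward invariant for the sequence `f`. -/
def FwdInvariant (f : ℕ → M → M) (A : Set M) : Prop := ∀ n : ℕ, f n '' A ⊆ A

/-- `m` is locally ergodic for `f`. -/
def LocallyErgodic [MeasurableSpace M] (m : Measure M) (f : ℕ → M → M) : Prop :=
  ∀ A : Set M, MeasurableSet A → FwdInvariant f A → 0 < m A →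
    ∃ B : Set M, IsOpen B ∧ B.Nonempty ∧ m (B \ A) = 0

/-- `m` is locally strong ergodic for `f`. -/
def LocallyStrongErgodic [MeasurableSpace M] (m : Measure M) (f : ℕ → M → M) : Prop :=
  ∃ ε : ℝ, 0 < ε ∧ ∀ A : Set M, MeasurableSet A → FwdInvariant f A → 0 < m A →
    ∃ B : Set M, IsOpen B ∧ ENNReal.ofReal ε < m B ∧ m (B \ A) = 0

/-- Birkhoff sum `S_n ψ (k, x) = ∑_{i<n} ψ_{k+i}(f_k^i x)`. -/
def BirkhoffSum (f : ℕ → M → M) (ψ : ℕ → M → ℝ) (k : ℕ) (x : M) (n : ℕ) : ℝ :=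
  ∑ i ∈ Finset.range n, ψ (k + i) (iter f k i x)

/-- `V` is a `(δ, lam)`-hyperbolic preball of order `n` for the point `(k, x)`. -/
def IsHypPreball (f : ℕ → M → M) (δ lam : ℝ) (k : ℕ) (x : M) (n : ℕ) (V : Set M) : Prop :=
  x ∈ V ∧ IsOpen V ∧
  Set.BijOn (iter f k n) V (ball (iter f k n x) δ) ∧
  (∃ g : M → M, ContinuousOn g (ball (iter f k n x) δ) ∧
      Set.InvOn g (iter f k n) V (ball (iter f k n x) δ)) ∧
  ∀ y ∈ V, ∀ z ∈ V, ∀ i < n,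
    dist (iter f k i y) (iter f k i z) ≤ lam ^ (n - i) * dist (iter f k n y) (iter f k n z)

/-- The preball `V` (of order `n` at state `k`) has distortion bounded by `K`. -/
def BddDistortion [MeasurableSpace M] (m : Measure M) (f : ℕ → M → M)
    (k n : ℕ) (V : Set M) (K : ℝ) : Prop :=
  ∀ A B : Set M, MeasurableSet A → MeasurableSet B → A ⊆ V → B ⊆ V →
    m (iter f k n '' A) * m B ≤ ENNReal.ofReal K * (m A * m (iter f k n '' B))

/-- `V` is `L`-regular at `x`: the smallest ball around `x` containing `V` has measure at
most `L` times the measure of the largest ball around `x` contained in `V`. -/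
def RegularAt [MeasurableSpace M] (m : Measure M) (x : M) (V : Set M) (L : ℝ) : Prop :=
  m (ball x (sInf {s : ℝ | V ⊆ ball x s})) ≤
    ENNReal.ofReal L * m (ball x (sSup {s : ℝ | 0 ≤ s ∧ ball x s ⊆ V}))

/-- `(k, x)` has infinitely many `(δ, lam)`-hyperbolic preballs with bounded distortion. -/
def InfManyPreballsBD [MeasurableSpace M] (m : Measure M) (f : ℕ → M → M)
    (δ lam : ℝ) (k : ℕ) (x : M) : Prop :=
  ∃ K : ℝ, 0 < K ∧ ∀ N : ℕ, ∃ n ≥ N, ∃ V : Set M,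
    IsHypPreball f δ lam k x n V ∧ BddDistortion m f k n V K

/-- `(k, x)` has infinitely many regular `(δ, lam)`-hyperbolic preballs with bounded
distortion. -/
def InfManyRegPreballsBD [MeasurableSpace M] (m : Measure M) (f : ℕ → M → M)
    (δ lam : ℝ) (k : ℕ) (x : M) : Prop :=
  ∃ K : ℝ, 0 < K ∧ ∃ L : ℝ, 0 < L ∧ ∀ N : ℕ, ∃ n ≥ N, ∃ V : Set M,
    IsHypPreball f δ lam k x n V ∧ BddDistortion m f k n V K ∧ RegularAt m x V L

/-- `n` is a `σ`-hyperbolic time of `f` for `(k, x)` with Lipschitz data `φ`. -/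
def IsHypTime (f : ℕ → M → M) (φ : ℕ → M → ℝ) (σ : ℝ) (k : ℕ) (x : M) (n : ℕ) : Prop :=
  1 ≤ n ∧ ∀ ℓ : ℕ, 1 ≤ ℓ → ℓ ≤ n →
    ∏ i ∈ Finset.Ico (n - ℓ) n, φ (k + i) (iter f k i x) ≤ σ ^ ℓ

/-- `f` maps `U` homeomorphically onto `B`. -/
def MapsHomeoOnto (f : M → M) (U B : Set M) : Prop :=
  Set.BijOn f U B ∧ ContinuousOn f U ∧
  ∃ g : M → M, ContinuousOn g B ∧ Set.InvOn g f U B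

/-- The metric measure space satisfies the density point property. -/
def DensityPointProperty [MeasurableSpace M] (m : Measure M) : Prop :=
  ∀ A : Set M, MeasurableSet A → ∀ᵐ x ∂m, x ∈ A →
    Tendsto (fun r : ℝ => m (A ∩ ball x r) / m (ball x r))
      (nhdsWithin (0 : ℝ) (Set.Ioi 0)) (nhds 1)

/-- `m` is locally doubling. -/
def LocallyDoubling [MeasurableSpace M] (m : Measure M) : Prop :=
  ∃ ρ L₀ : ℝ, 0 < ρ ∧ 0 < L₀ ∧ ∀ x : M, ∀ r : ℝ, 0 < r → r ≤ ρ →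
    m (ball x (2 * r)) ≤ ENNReal.ofReal L₀ * m (ball x r)

/-- Any two points of `U` are joined by a rectifiable curve in `U` whose length equals
their distance. -/
def IsGeodesicIn (U : Set M) : Prop :=
  ∀ y ∈ U, ∀ z ∈ U, ∃ γ : ℝ → M, ContinuousOn γ (Set.Icc (0 : ℝ) 1) ∧
    Set.MapsTo γ (Set.Icc (0 : ℝ) 1) U ∧ γ 0 = y ∧ γ 1 = z ∧
    eVariationOn γ (Set.Icc (0 : ℝ) 1) = ENNReal.ofReal (dist y z)

/-- `(M, d)` is a locally geodesic metric space. -/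
def LocallyGeodesic (M : Type*) [MetricSpace M] : Prop :=
  ∀ x : M, ∃ U ∈ nhds x, IsGeodesicIn U

/-- The sequence `f` is conformal with conformal factors `φ`. -/
def ConformalSeq (f : ℕ → M → M) (φ : ℕ → M → ℝ) : Prop :=
  ∀ n : ℕ, ∀ x : M,
    Tendsto (fun y : M => dist (f n x) (f n y) / dist x y)
      (nhdsWithin x {x}ᶜ) (nhds (Real.exp (-(φ n x))))

/-- `m` is `f`-conformal with Jacobian functions `ψ`. -/
def ConformalMeasure [MeasurableSpace M] (m : Measure M) (f : ℕ → M → M)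
    (ψ : ℕ → M → ℝ) : Prop :=
  ∀ n : ℕ, ∀ A : Set M, MeasurableSet A → Set.InjOn (f n) A →
    m (f n '' A) = ∫⁻ x in A, ENNReal.ofReal (Real.exp (-(ψ n x))) ∂m

/-- `f` is a local homeomorphism. -/
def IsLocalHomeo (f : M → M) : Prop :=
  ∀ x : M, ∃ U : Set M, IsOpen U ∧ x ∈ U ∧ ∃ W : Set M, IsOpen W ∧ MapsHomeoOnto f U W

/-- The maps `f n` are local homeomorphisms with uniform Lipschitz constant `φ` for the
inverse branches. -/
def UnifLipInvBranches (f : ℕ → M → M) (φ : ℕ → M → ℝ) : Prop :=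
  ∀ k : ℕ, ∀ x : M, ∃ V : Set M, IsOpen V ∧ x ∈ V ∧
    (∃ W : Set M, IsOpen W ∧ MapsHomeoOnto (f k) V W) ∧
    ∀ y ∈ V, ∀ z ∈ V, dist y z ≤ φ k x * dist (f k y) (f k z)



private lemma iter_cont' {M : Type*} [MetricSpace M] (f : ℕ → M → M)
    (hf : ∀ n, Continuous (f n)) (k i : ℕ) : Continuous (iter f k i) := by
  induction i with
  | zero => exact continuous_id
  | succ m ih => exact (hf (k + m)).comp ih

/-- bounded Birkhoff-sum distortion on hyperbolic preballs for locally
Hölder potentials. -/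
theorem birkhoff_distortion_on_preball {M : Type*} [MetricSpace M] [CompactSpace M]
    (f : ℕ → M → M) (hf : ∀ n, Continuous (f n)) (ψ : ℕ → M → ℝ)
    (k : ℕ) (α ε C : ℝ) (hα0 : 0 < α) (hα1 : α ≤ 1) (hε : 0 < ε) (hC : 0 < C)
    (hHolder : ∀ n ≥ k, ∀ x y : M, dist x y < ε → |ψ n x - ψ n y| ≤ C * dist x y ^ α)
    (δ lam : ℝ) (hδ : 0 < δ) (h2δ : 2 * δ ≤ ε) (hlam0 : 0 < lam) (hlam1 : lam < 1)
    (x : M) (n : ℕ) (hn : 1 ≤ n) (V : Set M) (hV : IsHypPreball f δ lam k x n V) :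
    ∀ y ∈ closure V, ∀ z ∈ closure V,
      (Real.exp (C * (2 * δ) ^ α * (1 - lam ^ α)⁻¹))⁻¹ ≤
          Real.exp (BirkhoffSum f ψ k y n - BirkhoffSum f ψ k z n) ∧
        Real.exp (BirkhoffSum f ψ k y n - BirkhoffSum f ψ k z n) ≤
          Real.exp (C * (2 * δ) ^ α * (1 - lam ^ α)⁻¹) := by
  obtain ⟨hxV, hVopen, hbij, hginv, hcontr⟩ := hV
  have hδ' : 0 < 2 * δ := by linarith
  -- contraction extends to the closure
  have key : ∀ i < n, ∀ y ∈ closure V, ∀ z ∈ closure V,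
      dist (iter f k i y) (iter f k i z) ≤ lam ^ (n - i) * (2 * δ) := by
    intro i hi y hy z hz
    have hS : IsClosed {p : M × M |
        dist (iter f k i p.1) (iter f k i p.2) ≤ lam ^ (n - i) * (2 * δ)} :=
      isClosed_le (((iter_cont' f hf k i).comp continuous_fst).dist
        ((iter_cont' f hf k i).comp continuous_snd)) continuous_const
    have hsub : V ×ˢ V ⊆ {p : M × M |
        dist (iter f k i p.1) (iter f k i p.2) ≤ lam ^ (n - i) * (2 * δ)} := by
      rintro ⟨a, b⟩ ⟨ha, hb⟩
      have h1 := hcontr a ha b hb i hi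
      have ha' : iter f k n a ∈ ball (iter f k n x) δ := hbij.mapsTo ha
      have hb' : iter f k n b ∈ ball (iter f k n x) δ := hbij.mapsTo hb
      have hd : dist (iter f k n a) (iter f k n b) ≤ 2 * δ := by
        have := dist_triangle (iter f k n a) (iter f k n x) (iter f k n b)
        rw [mem_ball] at ha' hb'
        rw [dist_comm (iter f k n x) (iter f k n b)] at this
        linarith
      calc dist (iter f k i a) (iter f k i b)
          ≤ lam ^ (n - i) * dist (iter f k n a) (iter f k n b) := h1
        _ ≤ lam ^ (n - i) * (2 * δ) :=
            mul_le_mul_of_nonneg_left hd (pow_nonneg hlam0.le _)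
    have hmem : (y, z) ∈ closure (V ×ˢ V) := by
      rw [closure_prod_eq]; exact ⟨hy, hz⟩
    exact hS.closure_subset_iff.mpr hsub hmem
  intro y hy z hz
  set r : ℝ := lam ^ α with hr
  have hr0 : 0 ≤ r := Real.rpow_nonneg hlam0.le α
  have hr1 : r < 1 := Real.rpow_lt_one hlam0.le hlam1 hα0
  have hterm : ∀ i ∈ Finset.range n,
      |ψ (k + i) (iter f k i y) - ψ (k + i) (iter f k i z)| ≤
        C * (2 * δ) ^ α * r ^ (n - i) := by
    intro i hi
    have hi' : i < n := Finset.mem_range.mp hi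
    have hd := key i hi' y hy z hz
    have hlt : lam ^ (n - i) * (2 * δ) < ε := by
      have h1 : lam ^ (n - i) < 1 := pow_lt_one₀ hlam0.le hlam1 (by omega)
      nlinarith
    have h2 := hHolder (k + i) (Nat.le_add_right k i) (iter f k i y) (iter f k i z)
      (lt_of_le_of_lt hd hlt)
    refine h2.trans ?_
    have h3 : dist (iter f k i y) (iter f k i z) ^ α ≤ (lam ^ (n - i) * (2 * δ)) ^ α :=
      Real.rpow_le_rpow dist_nonneg hd hα0.le
    have h4 : (lam ^ (n - i) * (2 * δ)) ^ α = r ^ (n - i) * (2 * δ) ^ α := by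
      rw [Real.mul_rpow (pow_nonneg hlam0.le _) hδ'.le]
      congr 1
      rw [← Real.rpow_natCast lam (n - i), ← Real.rpow_mul hlam0.le, mul_comm,
        Real.rpow_mul hlam0.le, Real.rpow_natCast]
    calc C * dist (iter f k i y) (iter f k i z) ^ α
        ≤ C * (lam ^ (n - i) * (2 * δ)) ^ α := mul_le_mul_of_nonneg_left h3 hC.le
      _ = C * (2 * δ) ^ α * r ^ (n - i) := by rw [h4]; ring
  have hsum : |BirkhoffSum f ψ k y n - BirkhoffSum f ψ k z n| ≤
      C * (2 * δ) ^ α * (1 - r)⁻¹ := by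
    have h1 : BirkhoffSum f ψ k y n - BirkhoffSum f ψ k z n =
        ∑ i ∈ Finset.range n, (ψ (k + i) (iter f k i y) - ψ (k + i) (iter f k i z)) := by
      rw [Finset.sum_sub_distrib]; rfl
    rw [h1]
    calc |∑ i ∈ Finset.range n, (ψ (k + i) (iter f k i y) - ψ (k + i) (iter f k i z))|
        ≤ ∑ i ∈ Finset.range n, |ψ (k + i) (iter f k i y) - ψ (k + i) (iter f k i z)| :=
          Finset.abs_sum_le_sum_abs _ _
      _ ≤ ∑ i ∈ Finset.range n, C * (2 * δ) ^ α * r ^ (n - i) :=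
          Finset.sum_le_sum hterm
      _ = C * (2 * δ) ^ α * ∑ i ∈ Finset.range n, r ^ (n - i) := by
          rw [Finset.mul_sum]
      _ ≤ C * (2 * δ) ^ α * (1 - r)⁻¹ := by
          apply mul_le_mul_of_nonneg_left _ (by positivity)
          calc ∑ i ∈ Finset.range n, r ^ (n - i)
              ≤ ∑ i ∈ Finset.range n, r ^ i := by
                rw [← Finset.sum_range_reflect]
                apply Finset.sum_le_sum
                intro i hi
                have := Finset.mem_range.mp hi
                exact pow_le_pow_of_le_one hr0 hr1.le (by omega)
            _ ≤ ∑' i : ℕ, r ^ i :=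
                Summable.sum_le_tsum _ (fun i _ => pow_nonneg hr0 i)
                  (summable_geometric_of_lt_one hr0 hr1)
            _ = (1 - r)⁻¹ := tsum_geometric_of_lt_one hr0 hr1
  obtain ⟨hlo, hhi⟩ := abs_le.mp hsum
  constructor
  · rw [← Real.exp_neg]
    exact Real.exp_le_exp.mpr hlo
  · exact Real.exp_le_exp.mpr hhi
end

section
/- Let (M,d) be a compact metric space, f_{1,∞} = (f_n)_{n∈ℕ} a sequence of continuous maps f_n : M → M, and m a Borel probability measure on M that is f_{1,∞}-conformal with Jacobian functions ψ_n. Assume there are k ∈ ℕ, α ∈ (0,1], ε > 0 and C > 0 such that |ψ_n(x) − ψ_n(y)| ≤ C·d(x,y)^α whenever d(x,y) < ε and n ≥ k. Then every (δ,λ)-hyperbolic preball V of order n for a point (k,x), with 0 < 2δ ≤ ε and 0 < λ < 1, has distortion bounded by K = exp(C·(2δ)^α·(1−λ^α)^{−1}); that is, m(f_k^n(A))·m(B) ≤ K·m(A)·m(f_k^n(B)) for all Borel sets A, B ⊆ V. In particular the distortion constant depends only on δ, λ, α, C and not on x or on the order n. -/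
open MeasureTheory Metric Set Filter

variable {M : Type*} [MetricSpace M]

lemma iter_add (f : ℕ → M → M) (k a b : ℕ) :
    iter f k (a + b) = iter f (k + a) b ∘ iter f k a := by
  induction b with
  | zero => rfl
  | succ b ih =>
    show f (k + (a + b)) ∘ iter f k (a + b) = (f (k + a + b) ∘ iter f (k + a) b) ∘ iter f k a
    rw [ih]
    have : k + (a + b) = k + a + b := by omega
    rw [this, Function.comp_assoc]

lemma iter_continuous (f : ℕ → M → M) (hf : ∀ n, Continuous (f n)) (k n : ℕ) :
    Continuous (iter f k n) := by
  induction n with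
  | zero => exact continuous_id
  | succ n ih => exact (hf (k + n)).comp ih

/-- hyperbolic preballs of a conformal measure with locally Hölder
Jacobians have bounded distortion, with constant independent of the point and the
order of the preball. -/
theorem preball_bounded_distortion {M : Type*} [MetricSpace M] [CompactSpace M]
    [MeasurableSpace M] [BorelSpace M] (m : Measure M) [IsProbabilityMeasure m]
    (f : ℕ → M → M) (hf : ∀ n, Continuous (f n)) (ψ : ℕ → M → ℝ)
    (hconf : ConformalMeasure m f ψ)
    (k : ℕ) (α ε C : ℝ) (hα0 : 0 < α) (hα1 : α ≤ 1) (hε : 0 < ε) (hC : 0 < C)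
    (hHolder : ∀ n ≥ k, ∀ x y : M, dist x y < ε → |ψ n x - ψ n y| ≤ C * dist x y ^ α) :
    ∀ δ lam : ℝ, 0 < δ → 2 * δ ≤ ε → 0 < lam → lam < 1 →
      ∀ (x : M) (n : ℕ), 1 ≤ n → ∀ V : Set M, IsHypPreball f δ lam k x n V →
        BddDistortion m f k n V (Real.exp (C * (2 * δ) ^ α * (1 - lam ^ α)⁻¹)) := by
  intro δ lam hδ h2δ hlam0 hlam1 x n hn V hV
  obtain ⟨hxV, hVopen, hbij, -, hcontract⟩ := hV
  intro A B hA hB hAV hBV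
  set r : ℝ := lam ^ α with hr
  have hr0 : 0 < r := Real.rpow_pos_of_pos hlam0 α
  have hr1 : r < 1 := Real.rpow_lt_one hlam0.le hlam1 hα0
  set c : ℕ → ℝ := fun j => C * (2 * δ) ^ α * r ^ (n - j) with hc
  -- continuity of the Jacobian data
  have hψcont : ∀ j : ℕ, Continuous (ψ (k + j)) := by
    intro j
    rw [Metric.continuous_iff]
    intro b ε' hε'
    have ht0 : (0:ℝ) < (ε' / C) ^ α⁻¹ := Real.rpow_pos_of_pos (div_pos hε' hC) _
    refine ⟨min ε ((ε' / C) ^ α⁻¹), lt_min hε ht0, fun a ha => ?_⟩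
    have hd1 : dist a b < ε := ha.trans_le (min_le_left _ _)
    have hd2 : dist a b < (ε' / C) ^ α⁻¹ := ha.trans_le (min_le_right _ _)
    have h1 : |ψ (k + j) a - ψ (k + j) b| ≤ C * dist a b ^ α :=
      hHolder (k + j) (Nat.le_add_right k j) a b hd1
    have h2 : dist a b ^ α < ((ε' / C) ^ α⁻¹) ^ α := Real.rpow_lt_rpow dist_nonneg hd2 hα0
    have h3 : (((ε' / C) ^ α⁻¹ : ℝ)) ^ α = ε' / C := by
      rw [← Real.rpow_mul (div_pos hε' hC).le, inv_mul_cancel₀ hα0.ne', Real.rpow_one]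
    rw [Real.dist_eq]
    calc |ψ (k+j) a - ψ (k+j) b| ≤ C * dist a b ^ α := h1
      _ < C * (ε'/C) := by rw [← h3]; exact mul_lt_mul_of_pos_left h2 hC
      _ = ε' := by field_simp
  have hgmeas : ∀ j : ℕ, Measurable (fun y => ENNReal.ofReal (Real.exp (-(ψ (k + j) y)))) :=
    fun j => ((Real.continuous_exp.comp (hψcont j).neg).measurable).ennreal_ofReal
  -- injectivity of intermediate iterates on V
  have hIterInj : ∀ j, j ≤ n → Set.InjOn (iter f k j) V := by
    intro j hj y hy z hz hyz
    apply hbij.injOn hy hz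
    have h1 : iter f k n = iter f (k + j) (n - j) ∘ iter f k j := by
      have h2 := iter_add f k j (n - j)
      rwa [Nat.add_sub_cancel' hj] at h2
    rw [h1]; simp only [Function.comp_apply, hyz]
  -- measurability of images of measurable subsets of V
  have hmeasIm : ∀ (j : ℕ), j ≤ n → ∀ S : Set M, MeasurableSet S → S ⊆ V →
      MeasurableSet (iter f k j '' S) := fun j hj S hS hSV =>
    hS.image_of_continuousOn_injOn ((iter_continuous f hf k j).continuousOn)
      ((hIterInj j hj).mono hSV)
  -- one-step conformal change of variables
  have hstep_id : ∀ j, j < n → ∀ S : Set M, MeasurableSet S → S ⊆ V →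
      m (iter f k (j + 1) '' S) =
        ∫⁻ y in iter f k j '' S, ENNReal.ofReal (Real.exp (-(ψ (k + j) y))) ∂m := by
    intro j hj S hS hSV
    have hinj : Set.InjOn (f (k + j)) (iter f k j '' S) := by
      rintro _ ⟨a, ha, rfl⟩ _ ⟨b, hb, rfl⟩ hab
      have h' : iter f k (j + 1) a = iter f k (j + 1) b := by
        simpa [iter] using hab
      exact congrArg _ (hIterInj (j + 1) hj (hSV ha) (hSV hb) h')
    have him : iter f k (j + 1) '' S = f (k + j) '' (iter f k j '' S) := by
      rw [← Set.image_comp]; rfl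
    rw [him, hconf (k + j) _ (hmeasIm j hj.le S hS hSV) hinj]
  -- diameter of the image ball
  have hdist2 : ∀ w ∈ V, ∀ w' ∈ V, dist (iter f k n w) (iter f k n w') < 2 * δ := by
    intro w hw w' hw'
    have h1 : dist (iter f k n w) (iter f k n x) < δ := mem_ball.mp (hbij.mapsTo hw)
    have h2 : dist (iter f k n w') (iter f k n x) < δ := mem_ball.mp (hbij.mapsTo hw')
    calc dist (iter f k n w) (iter f k n w')
        ≤ dist (iter f k n w) (iter f k n x) + dist (iter f k n x) (iter f k n w') :=
          dist_triangle _ _ _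
      _ < δ + δ := by rw [dist_comm (iter f k n x)]; exact add_lt_add h1 h2
      _ = 2 * δ := by ring
  -- oscillation bound for the Jacobian along the preball
  have hosc : ∀ j, j < n → ∀ w ∈ V, ∀ w' ∈ V,
      ENNReal.ofReal (Real.exp (-(ψ (k + j) (iter f k j w)))) ≤
      ENNReal.ofReal (Real.exp (c j)) *
        ENNReal.ofReal (Real.exp (-(ψ (k + j) (iter f k j w')))) := by
    intro j hj w hw w' hw'
    have hd : dist (iter f k j w) (iter f k j w') ≤
        lam ^ (n - j) * dist (iter f k n w) (iter f k n w') := hcontract w hw w' hw' j hj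
    have hln1 : lam ^ (n - j) ≤ 1 := pow_le_one₀ hlam0.le hlam1.le
    have hdub : dist (iter f k j w) (iter f k j w') ≤ lam ^ (n - j) * (2 * δ) :=
      hd.trans (mul_le_mul_of_nonneg_left (hdist2 w hw w' hw').le (pow_nonneg hlam0.le _))
    have hdε : dist (iter f k j w) (iter f k j w') < ε := by
      calc dist (iter f k j w) (iter f k j w')
          ≤ lam ^ (n - j) * dist (iter f k n w) (iter f k n w') := hd
        _ ≤ 1 * dist (iter f k n w) (iter f k n w') :=
            mul_le_mul_of_nonneg_right hln1 dist_nonneg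
        _ = dist (iter f k n w) (iter f k n w') := one_mul _
        _ < 2 * δ := hdist2 w hw w' hw'
        _ ≤ ε := h2δ
    have hH := hHolder (k + j) (Nat.le_add_right k j) _ _ hdε
    have hpow : (lam ^ (n - j) : ℝ) ^ α = r ^ (n - j) := by
      rw [← Real.rpow_natCast lam (n - j), ← Real.rpow_natCast r (n - j), hr,
        ← Real.rpow_mul hlam0.le, ← Real.rpow_mul hlam0.le, mul_comm]
    have hrp : dist (iter f k j w) (iter f k j w') ^ α ≤ r ^ (n - j) * (2 * δ) ^ α := by
      rw [← hpow, ← Real.mul_rpow (pow_nonneg hlam0.le _) (by linarith)]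
      exact Real.rpow_le_rpow dist_nonneg hdub hα0.le
    have hcd : C * dist (iter f k j w) (iter f k j w') ^ α ≤ c j := by
      have h5 := mul_le_mul_of_nonneg_left hrp hC.le
      calc C * dist (iter f k j w) (iter f k j w') ^ α
          ≤ C * (r ^ (n - j) * (2 * δ) ^ α) := h5
        _ = c j := by rw [hc]; ring
    have hψb : -(ψ (k + j) (iter f k j w)) ≤ c j + -(ψ (k + j) (iter f k j w')) := by
      have h6 := abs_le.mp hH
      linarith [h6.1, h6.2]
    calc ENNReal.ofReal (Real.exp (-(ψ (k + j) (iter f k j w))))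
        ≤ ENNReal.ofReal (Real.exp (c j + -(ψ (k + j) (iter f k j w')))) :=
          ENNReal.ofReal_le_ofReal (Real.exp_le_exp.mpr hψb)
      _ = _ := by rw [Real.exp_add, ENNReal.ofReal_mul (Real.exp_nonneg _)]
  -- the telescoping claim
  have claim : ∀ j, j ≤ n →
      m (iter f k j '' A) * m B ≤
        ENNReal.ofReal (Real.exp (∑ i ∈ Finset.range j, c i)) *
          (m A * m (iter f k j '' B)) := by
    intro j
    induction j with
    | zero =>
      intro _
      simp [iter, Real.exp_zero]
    | succ j ih =>
      intro hj1
      have hjn : j < n := hj1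
      have ihj := ih hjn.le
      set SA := iter f k j '' A with hSA
      set SB := iter f k j '' B with hSB
      set g : M → ENNReal := fun y => ENNReal.ofReal (Real.exp (-(ψ (k + j) y))) with hg
      have hA1 : m (iter f k (j+1) '' A) = ∫⁻ y in SA, g y ∂m := hstep_id j hjn A hA hAV
      have hB1 : m (iter f k (j+1) '' B) = ∫⁻ y in SB, g y ∂m := hstep_id j hjn B hB hBV
      by_cases hSA0 : m SA = 0
      · have hz : m (iter f k (j+1) '' A) = 0 := by
          rw [hA1, setLIntegral_measure_zero _ _ hSA0]
        rw [hz, zero_mul]; exact zero_le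
      · have hpt : ∀ y ∈ SA, g y * m SB ≤
            ENNReal.ofReal (Real.exp (c j)) * ∫⁻ z in SB, g z ∂m := by
          rintro y hy
          obtain ⟨w, hw, rfl⟩ := hy
          calc g (iter f k j w) * m SB
              = ∫⁻ _ in SB, g (iter f k j w) ∂m := (setLIntegral_const _ _).symm
            _ ≤ ∫⁻ z in SB, ENNReal.ofReal (Real.exp (c j)) * g z ∂m := by
                refine setLIntegral_mono (measurable_const.mul (hgmeas j)) ?_
                rintro z hz
                obtain ⟨w', hw', rfl⟩ := hz
                exact hosc j hjn w (hAV hw) w' (hBV hw')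
            _ = ENNReal.ofReal (Real.exp (c j)) * ∫⁻ z in SB, g z ∂m :=
                lintegral_const_mul _ (hgmeas j)
        have hstep : m (iter f k (j+1) '' A) * m SB ≤
            (ENNReal.ofReal (Real.exp (c j)) * m (iter f k (j+1) '' B)) * m SA := by
          calc m (iter f k (j+1) '' A) * m SB
              = ∫⁻ y in SA, g y * m SB ∂m := by
                rw [hA1]; exact (lintegral_mul_const _ (hgmeas j)).symm
            _ ≤ ∫⁻ _ in SA, ENNReal.ofReal (Real.exp (c j)) * ∫⁻ z in SB, g z ∂m ∂m :=
                setLIntegral_mono measurable_const hpt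
            _ = (ENNReal.ofReal (Real.exp (c j)) * ∫⁻ z in SB, g z ∂m) * m SA :=
                setLIntegral_const _ _
            _ = (ENNReal.ofReal (Real.exp (c j)) * m (iter f k (j+1) '' B)) * m SA := by
                rw [← hB1]
        have hcomb : (m (iter f k (j+1) '' A) * m B) * m SA ≤
            (ENNReal.ofReal (Real.exp (∑ i ∈ Finset.range (j+1), c i)) *
              (m A * m (iter f k (j+1) '' B))) * m SA := by
          calc (m (iter f k (j+1) '' A) * m B) * m SA
              = (m SA * m B) * m (iter f k (j+1) '' A) := by ring
            _ ≤ (ENNReal.ofReal (Real.exp (∑ i ∈ Finset.range j, c i)) * (m A * m SB)) *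
                  m (iter f k (j+1) '' A) := mul_le_mul' ihj le_rfl
            _ = (ENNReal.ofReal (Real.exp (∑ i ∈ Finset.range j, c i)) * m A) *
                  (m (iter f k (j+1) '' A) * m SB) := by ring
            _ ≤ (ENNReal.ofReal (Real.exp (∑ i ∈ Finset.range j, c i)) * m A) *
                  ((ENNReal.ofReal (Real.exp (c j)) * m (iter f k (j+1) '' B)) * m SA) :=
                mul_le_mul' le_rfl hstep
            _ = ((ENNReal.ofReal (Real.exp (∑ i ∈ Finset.range j, c i)) *
                  ENNReal.ofReal (Real.exp (c j))) * (m A * m (iter f k (j+1) '' B))) * m SA := by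
                ring
            _ = _ := by
                rw [← ENNReal.ofReal_mul (Real.exp_nonneg _), ← Real.exp_add,
                  ← Finset.sum_range_succ]
        exact (ENNReal.mul_le_mul_iff_left hSA0 (measure_ne_top m SA)).mp hcomb
  -- final bound on the sum of oscillations
  have hsum : ∑ i ∈ Finset.range n, c i ≤ C * (2 * δ) ^ α * (1 - r)⁻¹ := by
    have h2δα : (0:ℝ) ≤ C * (2*δ)^α := mul_nonneg hC.le (Real.rpow_nonneg (by linarith) α)
    have hsplit : ∑ i ∈ Finset.range n, c i =
        C * (2*δ)^α * ∑ i ∈ Finset.range n, r ^ (n - i) := by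
      rw [Finset.mul_sum]
    rw [hsplit]
    refine mul_le_mul_of_nonneg_left ?_ h2δα
    have hre : ∑ i ∈ Finset.range n, r ^ (n - i) = ∑ i ∈ Finset.range n, r ^ (i + 1) := by
      rw [← Finset.sum_range_reflect (fun i => r ^ (i + 1)) n]
      refine Finset.sum_congr rfl fun i hi => ?_
      have hi' : i < n := Finset.mem_range.mp hi
      have he : n - 1 - i + 1 = n - i := by omega
      rw [he]
    rw [hre]
    calc ∑ i ∈ Finset.range n, r ^ (i+1)
        ≤ ∑ i ∈ Finset.range n, r ^ i := by
          refine Finset.sum_le_sum fun i _ => ?_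
          exact pow_le_pow_of_le_one hr0.le hr1.le (Nat.le_succ i)
      _ ≤ ∑' i : ℕ, r ^ i :=
          Summable.sum_le_tsum _ (fun i _ => pow_nonneg hr0.le i)
            (summable_geometric_of_lt_one hr0.le hr1)
      _ = (1 - r)⁻¹ := tsum_geometric_of_lt_one hr0.le hr1
  refine (claim n le_rfl).trans ?_
  exact mul_le_mul' (ENNReal.ofReal_le_ofReal (Real.exp_le_exp.mpr hsum)) le_rfl
end

section
/- Let (M,d) be a compact metric space and f : M → M a continuous map such that for every x ∈ M there exist δ_x > 0 and an open neighborhood U_x of x such that the restriction of f to U_x is a homeomorphism onto the open ball B(f(x), δ_x). Then there exists a uniform δ > 0 such that every x ∈ M has an open neighborhood W_x with f restricted to W_x a homeomorphism onto B(f(x), δ). -/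
open MeasureTheory Metric Set Filter

variable {M : Type*} [MetricSpace M]

/-- a continuous map on a compact metric space that is everywhere a local
homeomorphism onto balls admits a uniform radius. -/
theorem uniform_radius_of_local_homeo {M : Type*} [MetricSpace M] [CompactSpace M]
    (f : M → M) (hf : Continuous f)
    (h : ∀ x : M, ∃ δ : ℝ, 0 < δ ∧ ∃ U : Set M, IsOpen U ∧ x ∈ U ∧
      MapsHomeoOnto f U (ball (f x) δ)) :
    ∃ δ : ℝ, 0 < δ ∧ ∀ x : M, ∃ W : Set M, IsOpen W ∧ x ∈ W ∧
      MapsHomeoOnto f W (ball (f x) δ) := by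
  by_cases hM : Nonempty M
  · choose δ hδ U hU hxU hhom using h
    set V : M → Set M := fun x => U x ∩ f ⁻¹' (ball (f x) (δ x / 2)) with hV
    have hVopen : ∀ x, IsOpen (V x) := fun x => (hU x).inter (isOpen_ball.preimage hf)
    have hxV : ∀ x, x ∈ V x := fun x =>
      ⟨hxU x, by simp [Metric.mem_ball, half_pos (hδ x)]⟩
    obtain ⟨t, ht⟩ := isCompact_univ.elim_finite_subcover V hVopen
      (fun x _ => Set.mem_iUnion.mpr ⟨x, hxV x⟩)
    obtain ⟨x₀⟩ := hM
    have hx₀ := ht (Set.mem_univ x₀)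
    simp only [Set.mem_iUnion] at hx₀
    obtain ⟨i₀, hi₀t, _⟩ := hx₀
    have htne : t.Nonempty := ⟨i₀, hi₀t⟩
    set δ₀ : ℝ := t.inf' htne (fun x => δ x / 2) with hδ₀
    have hδ₀pos : 0 < δ₀ := by
      exact (Finset.lt_inf'_iff htne).mpr fun x _ => half_pos (hδ x)
    refine ⟨δ₀, hδ₀pos, fun x => ?_⟩
    have hx := ht (Set.mem_univ x)
    simp only [Set.mem_iUnion] at hx
    obtain ⟨i, hit, hiV⟩ := hx
    have hδ₀le : δ₀ ≤ δ i / 2 := Finset.inf'_le _ hit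
    have hsub : ball (f x) δ₀ ⊆ ball (f i) (δ i) := by
      intro y hy
      have h1 : dist (f x) (f i) < δ i / 2 := hiV.2
      have h2 : dist y (f x) < δ₀ := Metric.mem_ball.mp hy
      have := dist_triangle y (f x) (f i)
      exact Metric.mem_ball.mpr (by linarith)
    obtain ⟨hbij, hcont, g, hg, hinv⟩ := hhom i
    refine ⟨U i ∩ f ⁻¹' (ball (f x) δ₀), (hU i).inter (isOpen_ball.preimage hf),
      ⟨hiV.1, by simp [Metric.mem_ball, hδ₀pos]⟩, ?_, hcont.mono Set.inter_subset_left,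
      g, hg.mono hsub, ?_, ?_⟩
    · refine ⟨fun y hy => hy.2, hbij.injOn.mono Set.inter_subset_left, fun b hb => ?_⟩
      obtain ⟨u, hu, hub⟩ := hbij.surjOn (hsub hb)
      exact ⟨u, ⟨hu, by simp only [Set.mem_preimage, hub]; exact hb⟩, hub⟩
    · exact fun y hy => hinv.1 hy.1
    · exact fun b hb => hinv.2 (hsub hb)
  · refine ⟨1, one_pos, fun x => absurd ⟨x⟩ hM⟩
end

section
/- Let (M,d) be a compact metric space, f_{1,∞} = (f_n)_{n∈ℕ} a sequence of maps f_n : M → M with skew product F, and φ : ℕ × M → (0,∞) a function with sup{−log φ(k,x) : (k,x) ∈ ℕ × M} < ∞. Let a > 0, k ∈ ℕ and x ∈ M satisfy limsup_{n→∞} (1/n)·Σ_{i=0}^{n−1} log φ(F^i(k,x)) < −a. Then, with σ = e^{−a/2}, the point (k,x) has infinitely many σ-hyperbolic times; that is, there are infinitely many integers n ≥ 1 such that ∏_{i=n−ℓ}^{n−1} φ(F^i(k,x)) ≤ σ^ℓ for every ℓ = 1,…,n. -/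
open MeasureTheory Metric Set Filter

variable {M : Type*} [MetricSpace M]

/-- negative exponential average of the Lipschitz data yields infinitely
many `σ`-hyperbolic times with `σ = e^{-a/2}`. -/
theorem infinitely_many_hyperbolic_times {M : Type*} [MetricSpace M] [CompactSpace M]
    (f : ℕ → M → M) (φ : ℕ → M → ℝ) (hφpos : ∀ k x, 0 < φ k x)
    (hsup : ∃ S : ℝ, ∀ (k : ℕ) (x : M), -Real.log (φ k x) ≤ S)
    (a : ℝ) (ha : 0 < a) (k : ℕ) (x : M)
    (h : Filter.limsup
        (fun n : ℕ => (∑ i ∈ Finset.range n, Real.log (φ (k + i) (iter f k i x))) / n)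
        Filter.atTop < -a) :
    {n : ℕ | IsHypTime f φ (Real.exp (-(a / 2))) k x n}.Infinite := by
  classical
  set c : ℕ → ℝ := fun i => Real.log (φ (k + i) (iter f k i x)) with hc
  set Sn : ℕ → ℝ := fun n => ∑ i ∈ Finset.range n, c i with hSn
  -- eventually the averages are below -a
  have hev : ∀ᶠ n in atTop, Sn n / n < -a := by
    by_cases hb : Filter.IsBoundedUnder (· ≤ ·) atTop (fun n : ℕ => Sn n / n)
    · exact Filter.eventually_lt_of_limsup_lt h hb
    · exfalso
      have hset : {b : ℝ | ∀ᶠ n in atTop, Sn n / n ≤ b} = ∅ := by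
        ext b
        simp only [Set.mem_setOf_eq, Set.mem_empty_iff_false, iff_false]
        intro hb'
        exact hb ⟨b, Filter.eventually_map.2 hb'⟩
      rw [Filter.limsup_eq, hset, Real.sInf_empty] at h
      linarith
  obtain ⟨N₀, hN₀⟩ := Filter.eventually_atTop.1 hev
  set b : ℕ → ℝ := fun n => Sn n + n * (a / 2) with hbdef
  -- b is unbounded below
  have hub : ∀ T : ℝ, ∃ n : ℕ, b n < T := by
    intro T
    obtain ⟨n₁, hn₁⟩ := exists_nat_gt (2 * |T| / a)
    refine ⟨max (max N₀ 1) n₁, ?_⟩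
    set n := max (max N₀ 1) n₁ with hn
    have hnN₀ : N₀ ≤ n := le_trans (le_max_left _ _) (le_max_left _ _)
    have hn1 : 1 ≤ n := le_trans (le_max_right _ _) (le_max_left _ _)
    have hnn₁ : (n₁ : ℝ) ≤ n := Nat.cast_le.2 (le_max_right _ _)
    have hnpos : (0 : ℝ) < n := by positivity
    have h1 : Sn n / n < -a := hN₀ n hnN₀
    have h2 : Sn n < -a * n := by
      have := (div_lt_iff₀ hnpos).1 h1
      linarith
    have h3 : 2 * |T| < a * n₁ := by
      have := (div_lt_iff₀ ha).1 hn₁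
      linarith
    have h4 : -T ≤ |T| := neg_le_abs T
    show Sn n + (n : ℝ) * (a / 2) < T
    nlinarith
  -- not bounded above ⇒ infinite
  have key : ¬ BddAbove {n : ℕ | IsHypTime f φ (Real.exp (-(a / 2))) k x n} := by
    rintro ⟨N, hN⟩
    -- T = min of b over 0..N
    have hne : ((Finset.range (N + 1)).image b).Nonempty := by simp
    set T := ((Finset.range (N + 1)).image b).min' hne with hT
    have hTle : ∀ m ≤ N, T ≤ b m := by
      intro m hm
      exact Finset.min'_le _ _ (Finset.mem_image_of_mem b (Finset.mem_range.2 (Nat.lt_succ_of_le hm)))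
    have hex : ∃ n, b n < T := hub T
    set n := Nat.find hex with hnd
    have hbn : b n < T := Nat.find_spec hex
    have hmin : ∀ m, m < n → T ≤ b m := fun m hm => not_lt.1 (Nat.find_min hex hm)
    have hnN : N < n := by
      by_contra hle
      exact absurd (hTle n (not_lt.1 hle)) (not_le.2 hbn)
    have hn1 : 1 ≤ n := Nat.one_le_iff_ne_zero.2 (by
      intro h0
      have := hTle 0 (Nat.zero_le N)
      rw [h0] at hbn
      linarith)
    have hmem : n ∈ {n : ℕ | IsHypTime f φ (Real.exp (-(a / 2))) k x n} := by
      refine ⟨hn1, ?_⟩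
      intro ℓ hℓ1 hℓn
      set m := n - ℓ with hm
      have hmn : m < n := Nat.sub_lt (lt_of_lt_of_le Nat.one_pos hn1) hℓ1
      have hbm : T ≤ b m := hmin m hmn
      have hcast : (m : ℝ) = (n : ℝ) - ℓ := by
        rw [hm, Nat.cast_sub hℓn]
      have hsum : ∑ i ∈ Finset.Ico m n, c i = Sn n - Sn m :=
        Finset.sum_Ico_eq_sub c (le_of_lt hmn)
      have hkey : Sn n - Sn m ≤ (ℓ : ℝ) * (-(a / 2)) := by
        have : Sn n + (n : ℝ) * (a / 2) < Sn m + (m : ℝ) * (a / 2) := lt_of_lt_of_le hbn hbm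
        rw [hcast] at this
        nlinarith
      calc ∏ i ∈ Finset.Ico m n, φ (k + i) (iter f k i x)
          = ∏ i ∈ Finset.Ico m n, Real.exp (c i) := by
            refine Finset.prod_congr rfl fun i _ => ?_
            rw [hc]
            exact (Real.exp_log (hφpos _ _)).symm
        _ = Real.exp (∑ i ∈ Finset.Ico m n, c i) := (Real.exp_sum _ _).symm
        _ ≤ Real.exp ((ℓ : ℝ) * (-(a / 2))) := by
            rw [hsum]; exact Real.exp_le_exp.2 hkey
        _ = Real.exp (-(a / 2)) ^ ℓ := Real.exp_nat_mul _ ℓ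
    exact absurd (hN hmem) (not_le.2 hnN)
  exact Set.infinite_of_not_bddAbove key
end

section
/- Let (M,d) be a compact metric space, f_{1,∞} = (f_n)_{n∈ℕ} a sequence of maps f_n : M → M with skew product F, m a Borel probability measure on M, and φ : ℕ × M → (0,∞) a function with sup{−log φ(k,x) : (k,x) ∈ ℕ × M} < ∞. (i) If for m-almost every x ∈ M one has limsup_{n→∞} (1/n)·Σ_{i=0}^{n−1} log φ(F^i(1,x)) < 0, then for m-almost every x ∈ M there is σ = σ(x) ∈ (0,1) such that (1,x) has infinitely many σ-hyperbolic times. (ii) If there is a > 0 such that limsup_{n→∞} (1/n)·Σ_{i=0}^{n−1} log φ(F^i(1,x)) < −a for m-almost every x ∈ M, then, with the single value σ = e^{−a/2}, for m-almost every x ∈ M the point (1,x) has infinitely many σ-hyperbolic times. -/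
open MeasureTheory Metric Set Filter

variable {M : Type*} [MetricSpace M]

/-- From `limsup u < c < 0` (real limsup, possibly junk) extract a genuine eventual bound. -/
lemma exists_eventual_bound_of_limsup_lt {u : ℕ → ℝ} {c : ℝ} (hc : c < 0)
    (h : Filter.limsup u Filter.atTop < c) :
    ∃ b, b < c ∧ ∀ᶠ n in Filter.atTop, u n ≤ b := by
  rw [Filter.limsup_eq] at h
  by_contra hcon
  push_neg at hcon
  have hlb : ∀ b ∈ {a | ∀ᶠ n in Filter.atTop, u n ≤ a}, c ≤ b := by
    intro b hb
    by_contra hb'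
    exact absurd hb (by simpa [Filter.frequently_atTop] using hcon b (lt_of_not_ge hb'))
  rcases Set.eq_empty_or_nonempty {a | ∀ᶠ n in Filter.atTop, u n ≤ a} with hE | hE
  · rw [hE, Real.sInf_empty] at h
    linarith
  · exact absurd h (not_lt.mpr (le_csInf hE hlb))

/-- Record minima: if `T` is unbounded below, then past any `N` there is a record index. -/
lemma exists_record_min (T : ℕ → ℝ) (hT : ∀ c : ℝ, ∃ n, T n < c) (N : ℕ) :
    ∃ n, N < n ∧ ∀ j < n, T n ≤ T j := by
  classical
  set c := Finset.inf' (Finset.range (N + 1)) ⟨0, by simp⟩ T with hc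
  have hP : ∃ n, T n < c := hT c
  refine ⟨Nat.find hP, ?_, ?_⟩
  · by_contra hle
    push_neg at hle
    have : c ≤ T (Nat.find hP) :=
      Finset.inf'_le T (Finset.mem_range.mpr (Nat.lt_succ_of_le hle))
    exact absurd (Nat.find_spec hP) (not_lt.mpr this)
  · intro j hj
    have := Nat.find_min hP hj
    push_neg at this
    exact le_trans (le_of_lt (Nat.find_spec hP)) this

/-- Pointwise key lemma: a uniform negative limsup of Birkhoff averages of `log φ` yields
infinitely many `exp (-(a/2))`-hyperbolic times. -/
lemma key_hyp_times {M : Type*} [MetricSpace M] (f : ℕ → M → M) (φ : ℕ → M → ℝ)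
    (hφpos : ∀ k x, 0 < φ k x) (a : ℝ) (ha : 0 < a) (x : M)
    (hx : Filter.limsup
        (fun n : ℕ => (∑ i ∈ Finset.range n, Real.log (φ i (iter f 0 i x))) / n)
        Filter.atTop < -a) :
    {n : ℕ | IsHypTime f φ (Real.exp (-(a / 2))) 0 x n}.Infinite := by
  classical
  set ψ : ℕ → ℝ := fun i => Real.log (φ i (iter f 0 i x)) with hψ
  set T : ℕ → ℝ := fun n => (∑ i ∈ Finset.range n, ψ i) + n * (a / 2) with hTdef
  obtain ⟨b, hb, hev⟩ := exists_eventual_bound_of_limsup_lt (by linarith) hx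
  obtain ⟨N₀, hN₀⟩ := Filter.eventually_atTop.mp hev
  have hTlt : ∀ c : ℝ, ∃ n, T n < c := by
    intro c
    obtain ⟨n, hn⟩ := exists_nat_gt (max (max (N₀ : ℝ) 1) (-(2 * c) / a))
    rw [max_lt_iff, max_lt_iff] at hn
    refine ⟨n, ?_⟩
    have hn1 : (0 : ℝ) < n := lt_trans one_pos hn.1.2
    have hS : (∑ i ∈ Finset.range n, ψ i) / n ≤ b := by
      have : N₀ ≤ n := by exact_mod_cast le_of_lt hn.1.1
      exact hN₀ n this
    have hS' : (∑ i ∈ Finset.range n, ψ i) ≤ b * n := (div_le_iff₀ hn1).mp hS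
    have h1 : -(2 * c) < (n : ℝ) * a := (div_lt_iff₀ ha).mp hn.2
    simp only [hTdef]
    nlinarith
  apply Set.infinite_of_not_bddAbove
  rintro ⟨N, hN⟩
  obtain ⟨n, hNn, hrec⟩ := exists_record_min T hTlt N
  have hmem : n ∈ {n : ℕ | IsHypTime f φ (Real.exp (-(a / 2))) 0 x n} := by
    refine ⟨by omega, fun ℓ hℓ1 hℓn => ?_⟩
    have hcast : ((n - ℓ : ℕ) : ℝ) = (n : ℝ) - (ℓ : ℝ) := Nat.cast_sub hℓn
    have hTd : T n ≤ T (n - ℓ) := hrec (n - ℓ) (by omega)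
    have key2 : ∑ i ∈ Finset.Ico (n - ℓ) n, ψ i ≤ -(a / 2) * ℓ := by
      rw [Finset.sum_Ico_eq_sub ψ (Nat.sub_le n ℓ)]
      simp only [hTdef] at hTd
      rw [hcast] at hTd
      nlinarith
    calc ∏ i ∈ Finset.Ico (n - ℓ) n, φ (0 + i) (iter f 0 i x)
        = Real.exp (∑ i ∈ Finset.Ico (n - ℓ) n, ψ i) := by
          rw [Real.exp_sum]
          exact Finset.prod_congr rfl fun i _ => by
            simp only [hψ, zero_add]
            exact (Real.exp_log (hφpos _ _)).symm
      _ ≤ Real.exp (-(a / 2) * ℓ) := Real.exp_le_exp.mpr key2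
      _ = Real.exp (-(a / 2)) ^ ℓ := by rw [mul_comm, Real.exp_nat_mul]
  exact absurd (hN hmem) (not_le.mpr hNn)
/-- expanding measures give a.e. infinitely many hyperbolic times at the
first state (here the sequence is indexed from `0`, so the first state is `(0, x)`).
Part (i): nonuniform version; part (ii): uniform version. -/
theorem expanding_measure_hyperbolic_times {M : Type*} [MetricSpace M] [CompactSpace M]
    [MeasurableSpace M] [BorelSpace M] (m : Measure M) [IsProbabilityMeasure m]
    (f : ℕ → M → M) (φ : ℕ → M → ℝ) (hφpos : ∀ k x, 0 < φ k x)
    (hsup : ∃ S : ℝ, ∀ (k : ℕ) (x : M), -Real.log (φ k x) ≤ S) :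
    ((∀ᵐ x ∂m, Filter.limsup
        (fun n : ℕ => (∑ i ∈ Finset.range n, Real.log (φ i (iter f 0 i x))) / n)
        Filter.atTop < 0) →
      ∀ᵐ x ∂m, ∃ σ : ℝ, 0 < σ ∧ σ < 1 ∧
        {n : ℕ | IsHypTime f φ σ 0 x n}.Infinite) ∧
    (∀ a : ℝ, 0 < a →
      (∀ᵐ x ∂m, Filter.limsup
          (fun n : ℕ => (∑ i ∈ Finset.range n, Real.log (φ i (iter f 0 i x))) / n)
          Filter.atTop < -a) →
      ∀ᵐ x ∂m, {n : ℕ | IsHypTime f φ (Real.exp (-(a / 2))) 0 x n}.Infinite) := by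
  constructor
  · intro h
    filter_upwards [h] with x hx
    set L := Filter.limsup
        (fun n : ℕ => (∑ i ∈ Finset.range n, Real.log (φ i (iter f 0 i x))) / n)
        Filter.atTop with hL
    refine ⟨Real.exp (-(-L / 2 / 2)), Real.exp_pos _, ?_, ?_⟩
    · exact Real.exp_lt_one_iff.mpr (by linarith)
    · exact key_hyp_times f φ hφpos (-L / 2) (by linarith) x (by rw [← hL]; linarith)
  · intro a ha h
    filter_upwards [h] with x hx
    exact key_hyp_times f φ hφpos a ha x hx
end

section
/- Let (M,d) be a compact metric space, f_{1,∞} = (f_n)_{n∈ℕ} a sequence of maps f_n : M → M with skew product F, m a Borel probability measure on M, and φ : ℕ × M → (0,∞) a function with sup{−log φ(k,x) : (k,x) ∈ ℕ × M} < ∞. (i) If for m-almost every x ∈ M there exists k = k(x) ∈ ℕ with limsup_{n→∞} (1/n)·Σ_{i=0}^{n−1} log φ(F^i(k,x)) < 0, then for m-almost every x ∈ M there exist k = k(x) ∈ ℕ and σ = σ(x) ∈ (0,1) such that (k,x) has infinitely many σ-hyperbolic times. (ii) If there is a > 0 such that for m-almost every x ∈ M there exists k = k(x) ∈ ℕ with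 limsup_{n→∞} (1/n)·Σ_{i=0}^{n−1} log φ(F^i(k,x)) < −a, then, with the single value σ = e^{−a/2}, for m-almost every x ∈ M there exists k = k(x) ∈ ℕ such that (k,x) has infinitely many σ-hyperbolic times. -/
open MeasureTheory Metric Set Filter

variable {M : Type*} [MetricSpace M]

lemma key_infinite (c : ℕ → ℝ) (b : ℝ) (hb : b < 0)
    (h : Filter.limsup (fun n : ℕ => (∑ i ∈ Finset.range n, c i) / n) Filter.atTop < b) :
    {n : ℕ | 1 ≤ n ∧ ∀ ℓ : ℕ, 1 ≤ ℓ → ℓ ≤ n →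
      ∑ i ∈ Finset.Ico (n - ℓ) n, c i ≤ (ℓ : ℝ) * b}.Infinite := by
  classical
  set u : ℕ → ℝ := fun n => (∑ i ∈ Finset.range n, c i) / n with hu
  have hne : {a : ℝ | ∀ᶠ n in Filter.atTop, u n ≤ a}.Nonempty := by
    by_contra hemp
    rw [Set.not_nonempty_iff_eq_empty] at hemp
    have h0 : Filter.limsup u Filter.atTop = 0 := by
      rw [Filter.limsup_eq, hemp, Real.sInf_empty]
    rw [h0] at h
    linarith
  obtain ⟨a, ha, hab⟩ := exists_lt_of_csInf_lt hne (by rw [← Filter.limsup_eq]; exact h)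
  obtain ⟨N, hN⟩ := Filter.eventually_atTop.mp ha
  set S : ℕ → ℝ := fun n => ∑ i ∈ Finset.range n, c i with hS
  set T : ℕ → ℝ := fun n => S n - b * n with hT
  have hTle : ∀ n : ℕ, max N 1 ≤ n → T n ≤ (a - b) * n := by
    intro n hn
    have hn1 : 1 ≤ n := le_trans (le_max_right _ _) hn
    have hnpos : (0 : ℝ) < n := by exact_mod_cast hn1
    have := hN n (le_trans (le_max_left _ _) hn)
    have hSn : S n ≤ a * n := by
      rw [hu] at this
      have := (div_le_iff₀ hnpos).mp this
      simpa [hS] using this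
    simp only [hT]
    nlinarith
  have hunb : ∀ C : ℝ, ∃ n : ℕ, T n < C := by
    intro C
    have hab' : a - b < 0 := by linarith
    obtain ⟨n1, hn1⟩ := exists_nat_gt (C / (a - b))
    refine ⟨max n1 (max N 1), ?_⟩
    have hcast : (C / (a - b)) < (max n1 (max N 1) : ℕ) := by
      have : (n1 : ℝ) ≤ (max n1 (max N 1) : ℕ) := by exact_mod_cast le_max_left _ _
      linarith
    have h2 : ((max n1 (max N 1) : ℕ) : ℝ) * (a - b) < C := (div_lt_iff_of_neg hab').mp hcast
    have h3 := hTle (max n1 (max N 1)) (le_max_right _ _)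
    nlinarith
  -- records are infinite
  have hrec : ∀ m : ℕ, ∃ n : ℕ, m < n ∧ ∀ j : ℕ, j < n → T n ≤ T j := by
    intro m
    obtain ⟨j0, hj0mem, hj0min⟩ := Finset.exists_min_image (Finset.range (m + 1)) T
      ⟨0, Finset.mem_range.mpr (Nat.succ_pos m)⟩
    set v := T j0 with hv
    obtain ⟨n0, hn0⟩ := hunb v
    have hP : ∃ n, T n < v := ⟨n0, hn0⟩
    set n := Nat.find hP with hn
    have hPn : T n < v := Nat.find_spec hP
    have hmin : ∀ j : ℕ, j < n → ¬ T j < v := fun j hj => Nat.find_min hP hj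
    have hmn : m < n := by
      by_contra hc
      push_neg at hc
      have : v ≤ T n := hj0min n (Finset.mem_range.mpr (Nat.lt_succ_of_le hc))
      linarith
    refine ⟨n, hmn, fun j hj => ?_⟩
    have := hmin j hj
    push_neg at this
    linarith
  have hmem : ∀ m : ℕ, ∃ n, (1 ≤ n ∧ ∀ ℓ : ℕ, 1 ≤ ℓ → ℓ ≤ n →
      ∑ i ∈ Finset.Ico (n - ℓ) n, c i ≤ (ℓ : ℝ) * b) ∧ m < n := by
    intro m
    obtain ⟨n, hmn, hrecn⟩ := hrec m
    refine ⟨n, ⟨Nat.one_le_iff_ne_zero.mpr (by omega), fun ℓ hℓ1 hℓn => ?_⟩, hmn⟩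
    have hjlt : n - ℓ < n := Nat.sub_lt (by omega) hℓ1
    have hTT := hrecn (n - ℓ) hjlt
    have hsum : ∑ i ∈ Finset.Ico (n - ℓ) n, c i = S n - S (n - ℓ) :=
      Finset.sum_Ico_eq_sub c (Nat.sub_le n ℓ)
    have hcast : ((n - ℓ : ℕ) : ℝ) = (n : ℝ) - (ℓ : ℝ) := by
      exact Nat.cast_sub hℓn
    simp only [hT] at hTT
    rw [hsum, hcast] at *
    nlinarith
  by_contra hfin
  rw [Set.not_infinite] at hfin
  obtain ⟨m, hm⟩ := hfin.bddAbove
  obtain ⟨n, hn, hmn⟩ := hmem m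
  exact absurd (hm hn) (by omega)

lemma isHypTime_of_sums (f : ℕ → M → M) (φ : ℕ → M → ℝ) (hφpos : ∀ k x, 0 < φ k x)
    (b : ℝ) (k : ℕ) (x : M) (n : ℕ) (hn : 1 ≤ n)
    (h : ∀ ℓ : ℕ, 1 ≤ ℓ → ℓ ≤ n →
      ∑ i ∈ Finset.Ico (n - ℓ) n, Real.log (φ (k + i) (iter f k i x)) ≤ (ℓ : ℝ) * b) :
    IsHypTime f φ (Real.exp b) k x n := by
  refine ⟨hn, fun ℓ hℓ1 hℓn => ?_⟩
  have hprod : ∏ i ∈ Finset.Ico (n - ℓ) n, φ (k + i) (iter f k i x) =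
      Real.exp (∑ i ∈ Finset.Ico (n - ℓ) n, Real.log (φ (k + i) (iter f k i x))) := by
    rw [Real.exp_sum]
    exact Finset.prod_congr rfl fun i _ => (Real.exp_log (hφpos _ _)).symm
  have hpow : (Real.exp b) ^ ℓ = Real.exp ((ℓ : ℝ) * b) := (Real.exp_nat_mul b ℓ).symm
  rw [hprod, hpow]
  exact Real.exp_le_exp.mpr (h ℓ hℓ1 hℓn)

/-- expandable measures give a.e. some state with infinitely many
hyperbolic times. Part (i): nonuniform version; part (ii): uniform version. -/
theorem expandable_measure_hyperbolic_times {M : Type*} [MetricSpace M] [CompactSpace M]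
    [MeasurableSpace M] [BorelSpace M] (m : Measure M) [IsProbabilityMeasure m]
    (f : ℕ → M → M) (φ : ℕ → M → ℝ) (hφpos : ∀ k x, 0 < φ k x)
    (hsup : ∃ S : ℝ, ∀ (k : ℕ) (x : M), -Real.log (φ k x) ≤ S) :
    ((∀ᵐ x ∂m, ∃ k : ℕ, Filter.limsup
        (fun n : ℕ => (∑ i ∈ Finset.range n, Real.log (φ (k + i) (iter f k i x))) / n)
        Filter.atTop < 0) →
      ∀ᵐ x ∂m, ∃ k : ℕ, ∃ σ : ℝ, 0 < σ ∧ σ < 1 ∧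
        {n : ℕ | IsHypTime f φ σ k x n}.Infinite) ∧
    (∀ a : ℝ, 0 < a →
      (∀ᵐ x ∂m, ∃ k : ℕ, Filter.limsup
          (fun n : ℕ => (∑ i ∈ Finset.range n, Real.log (φ (k + i) (iter f k i x))) / n)
          Filter.atTop < -a) →
      ∀ᵐ x ∂m, ∃ k : ℕ,
        {n : ℕ | IsHypTime f φ (Real.exp (-(a / 2))) k x n}.Infinite) := by
  constructor
  · intro hyp
    filter_upwards [hyp] with x hx
    obtain ⟨k, hk⟩ := hx
    set L := Filter.limsup
        (fun n : ℕ => (∑ i ∈ Finset.range n, Real.log (φ (k + i) (iter f k i x))) / n)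
        Filter.atTop with hL
    refine ⟨k, Real.exp (L / 2), Real.exp_pos _, Real.exp_lt_one_iff.mpr (by linarith), ?_⟩
    have hinf := key_infinite (fun i => Real.log (φ (k + i) (iter f k i x))) (L / 2)
      (by linarith) (by rw [← hL]; linarith)
    refine hinf.mono fun n hn => isHypTime_of_sums f φ hφpos (L / 2) k x n hn.1 hn.2
  · intro a ha hyp
    filter_upwards [hyp] with x hx
    obtain ⟨k, hk⟩ := hx
    refine ⟨k, ?_⟩
    have hinf := key_infinite (fun i => Real.log (φ (k + i) (iter f k i x))) (-(a / 2))
      (by linarith) (lt_trans hk (by linarith))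
    refine hinf.mono fun n hn => isHypTime_of_sums f φ hφpos (-(a / 2)) k x n hn.1 hn.2
end

section
/- Let M be a topological space with a Borel probability measure m, and let Γ be a semigroup of Borel measurable maps g : M → M such that for every g ∈ Γ and every measurable set E with m(E) = 0, the image g(E) has m-outer measure zero. Call a measurable set A ⊆ M forward Γ-invariant if g(A) ⊆ A for all g ∈ Γ. Assume (exactness) for every nonempty open set B ⊆ M there is a sequence (g_j)_{j∈ℕ} in Γ with m(M \ ⋃_{j∈ℕ} g_j(B)) = 0 (the complement of the union having outer measure zero), and (local ergodicity) every forward Γ-invariant measurable set A with m(A) > 0 admits a nonempty open set B with m(B \ A) = 0. Then m is Γ-ergodic: m(A) ∈ {0,1} for every forward Γ-invariant measurable set A. -/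
open MeasureTheory Metric Set Filter

variable {M : Type*} [MetricSpace M]

/-- an exact, locally ergodic, forward non-singular semigroup action is
ergodic. -/
theorem ergodic_of_exact_and_locally_ergodic {M : Type*} [TopologicalSpace M]
    [MeasurableSpace M] [BorelSpace M] (m : Measure M) [IsProbabilityMeasure m]
    (Γ : Set (M → M)) (hmeas : ∀ g ∈ Γ, Measurable g)
    (hsemi : ∀ g ∈ Γ, ∀ h ∈ Γ, g ∘ h ∈ Γ)
    (hnull : ∀ g ∈ Γ, ∀ E : Set M, MeasurableSet E → m E = 0 → m (g '' E) = 0)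
    (hexact : ∀ B : Set M, IsOpen B → B.Nonempty →
      ∃ g : ℕ → (M → M), (∀ j, g j ∈ Γ) ∧ m (Set.univ \ ⋃ j, g j '' B) = 0)
    (hloc : ∀ A : Set M, MeasurableSet A → (∀ g ∈ Γ, g '' A ⊆ A) → 0 < m A →
      ∃ B : Set M, IsOpen B ∧ B.Nonempty ∧ m (B \ A) = 0) :
    ∀ A : Set M, MeasurableSet A → (∀ g ∈ Γ, g '' A ⊆ A) →
      m A = 0 ∨ m A = 1 := by
  intro A hA hinv
  rcases eq_or_lt_of_le (zero_le : 0 ≤ m A) with h0 | hpos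
  · exact Or.inl h0.symm
  right
  obtain ⟨B, hBopen, hBne, hBA⟩ := hloc A hA hinv hpos
  obtain ⟨g, hg, hgnull⟩ := hexact B hBopen hBne
  have hcompl : m Aᶜ = 0 := by
    have hsub : Aᶜ ⊆ (Set.univ \ ⋃ j, g j '' B) ∪ ⋃ j, g j '' (B \ A) := by
      intro x hx
      by_cases hxu : x ∈ ⋃ j, g j '' B
      · right
        obtain ⟨j, y, hy, rfl⟩ : ∃ j, ∃ y ∈ B, g j y = x := by simpa using hxu
        exact mem_iUnion.2 ⟨j, ⟨y, ⟨hy, fun hyA => hx (hinv _ (hg j) ⟨y, hyA, rfl⟩)⟩, rfl⟩⟩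
      · exact Or.inl ⟨trivial, hxu⟩
    refine measure_mono_null hsub (measure_union_null hgnull ?_)
    exact measure_iUnion_null fun j =>
      hnull _ (hg j) _ (hBopen.measurableSet.diff hA) hBA
  exact (prob_compl_eq_zero_iff hA).mp hcompl
end
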